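/- arXiv:0912.5095 — 2 statements merged into one kernel-verified Lean document; each statement's English description precedes it below -/
import Mathlib

section
/- There exists a constant a > 0 such that for all real x, y, |1 + e^{ix} + e^{iy}|² ≥ a·(|4cos²x − 1|² + |4cos²y − 1|²). -/
/-! Write `u = e^{ix}`, `v = e^{iy}` and `w = 1 + u + v`. Since `4 cos² x - 1 = (2 cos x - 1)(1 + u + ū)`
and `|2 cos x - 1| ≤ 3`, it suffices to bound `|1 + u + ū| = |w + (ū - v)|` by a multiple of `|w|`,
and `|ū - v| = |1 - uv|`. On the unit circle `(1 - uv)(ū + v̄) = w̄ - w`, so `|1 - uv| |u + v| ≤ 2|w|`;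
this controls `|1 - uv|` when `|u + v|` is not small, and otherwise `w` is close to `1`. -/

open Complex ComplexConjugate

namespace Complex

variable {u v : ℂ}

lemma mul_conj_of_norm_eq_one (hu : ‖u‖ = 1) : u * conj u = 1 := by
  simp [mul_conj', hu]

lemma one_sub_mul_mul_conj_add (hu : ‖u‖ = 1) (hv : ‖v‖ = 1) :
    (1 - u * v) * conj (u + v) = conj (1 + u + v) - (1 + u + v) := by
  simp only [map_add, map_one]
  linear_combination (-v) * mul_conj_of_norm_eq_one hu - u * mul_conj_of_norm_eq_one hv

lemma norm_one_sub_mul_mul_norm_add_le (hu : ‖u‖ = 1) (hv : ‖v‖ = 1) :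
    ‖1 - u * v‖ * ‖u + v‖ ≤ 2 * ‖1 + u + v‖ := by
  calc ‖1 - u * v‖ * ‖u + v‖
      = ‖conj (1 + u + v) - (1 + u + v)‖ := by
        rw [← one_sub_mul_mul_conj_add hu hv, norm_mul, norm_conj]
    _ ≤ 2 * ‖1 + u + v‖ := by
        linarith [norm_sub_le (conj (1 + u + v)) (1 + u + v), norm_conj (1 + u + v)]

lemma norm_one_sub_mul_le (hu : ‖u‖ = 1) (hv : ‖v‖ = 1) :
    ‖1 - u * v‖ ≤ 4 * ‖1 + u + v‖ := by
  rcases le_or_gt (1 / 2) ‖u + v‖ with hlarge | hsmall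
  · nlinarith [norm_one_sub_mul_mul_norm_add_le hu hv, norm_nonneg (1 - u * v)]
  · have hw : 1 / 2 < ‖1 + u + v‖ := by
      have := norm_sub_le (1 + (u + v)) (u + v)
      rw [add_sub_cancel_right, norm_one] at this
      rw [add_assoc]
      linarith
    have h2 : ‖1 - u * v‖ ≤ 2 := by
      calc ‖1 - u * v‖ ≤ ‖(1 : ℂ)‖ + ‖u * v‖ := norm_sub_le _ _
        _ = 2 := by rw [norm_one, norm_mul, hu, hv]; norm_num
    linarith

lemma abs_one_add_two_mul_re_le (hu : ‖u‖ = 1) (hv : ‖v‖ = 1) :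
    |1 + 2 * u.re| ≤ 5 * ‖1 + u + v‖ := by
  have hsplit : ((1 + 2 * u.re : ℝ) : ℂ) = (1 + u + v) + (conj u - v) := by
    rw [ofReal_add, ofReal_one, ← add_conj]; ring
  have hdiff : ‖conj u - v‖ = ‖1 - u * v‖ := by
    rw [← one_mul ‖conj u - v‖, ← hu, ← norm_mul, mul_sub, mul_conj_of_norm_eq_one hu]
  calc |1 + 2 * u.re| = ‖((1 + 2 * u.re : ℝ) : ℂ)‖ := (norm_real _).symm
    _ ≤ ‖1 + u + v‖ + ‖1 - u * v‖ := by rw [hsplit, ← hdiff]; exact norm_add_le _ _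
    _ ≤ 5 * ‖1 + u + v‖ := by linarith [norm_one_sub_mul_le hu hv]

lemma abs_four_mul_re_sq_sub_one_le (hu : ‖u‖ = 1) (hv : ‖v‖ = 1) :
    |4 * u.re ^ 2 - 1| ≤ 15 * ‖1 + u + v‖ := by
  have hre : |u.re| ≤ 1 := hu ▸ abs_re_le_norm u
  have hfirst : |2 * u.re - 1| ≤ 3 := by
    rw [abs_le] at hre ⊢; constructor <;> linarith
  calc |4 * u.re ^ 2 - 1| = |2 * u.re - 1| * |1 + 2 * u.re| := by
        rw [← abs_mul]; ring_nf
    _ ≤ 3 * (5 * ‖1 + u + v‖) :=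
        mul_le_mul hfirst (abs_one_add_two_mul_re_le hu hv) (abs_nonneg _) (by norm_num)
    _ = 15 * ‖1 + u + v‖ := by ring

end Complex

theorem phi_lower_bound :
    ∃ a : ℝ, 0 < a ∧ ∀ x y : ℝ,
      ‖1 + Complex.exp (Complex.I * x) + Complex.exp (Complex.I * y)‖ ^ 2 ≥
        a * (|4 * Real.cos x ^ 2 - 1| ^ 2 + |4 * Real.cos y ^ 2 - 1| ^ 2) := by
  refine ⟨1 / 450, by norm_num, fun x y => ?_⟩
  set u := Complex.exp (Complex.I * x)
  set v := Complex.exp (Complex.I * y)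
  have hu : ‖u‖ = 1 := by simp [u]
  have hv : ‖v‖ = 1 := by simp [v]
  have hx : |4 * Real.cos x ^ 2 - 1| ≤ 15 * ‖1 + u + v‖ := by
    simpa [u, mul_comm I] using abs_four_mul_re_sq_sub_one_le hu hv
  have hy : |4 * Real.cos y ^ 2 - 1| ≤ 15 * ‖1 + u + v‖ := by
    simpa [v, mul_comm I, add_right_comm _ u] using abs_four_mul_re_sq_sub_one_le hv hu
  nlinarith [abs_nonneg (4 * Real.cos x ^ 2 - 1), abs_nonneg (4 * Real.cos y ^ 2 - 1)]
end

section
/- Define z_α = Σ_{k=1}^n (1/3)^k e^{iπ(1/2 + (2/3)α_k)} for α ∈ {−1,0,1}^n. Then for distinct α, β ∈ {−1,0,1}^n, the discs B(z_α, 3^{−n}) and B(z_β, 3^{−n}) with the same radius 3^{−n} have disjoint interiors provided |z_α − z_β| ≥ 2·3^{−n}; moreover |z_α − z_β| ≥ √3·3^{−j}·(1 − Σ_{k=1}^∞ 3^{−k}) where j is the first index where α and β differ — in particular z_α ≠ z_β for α ≠ β. -/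
/-!
The three directions `gasketDir a`, `a ∈ {-1, 0, 1}`, are the vertices of an equilateral triangle
inscribed in the unit circle, so two distinct ones are at distance `√3`. Hence
`z_α - z_β = ∑ₖ 3^{-(k+1)} (gasketDir αₖ - gasketDir βₖ)` has vanishing terms before the first
index `j` where `α` and `β` differ, a term of norm `√3 · 3^{-(j+1)}` at `j`, and a tail of norm at most
`√3 · 3^{-(j+1)} · ∑_{m ≥ 1} 3^{-m}`. Since that series sums to `1/2`, the centres are distinct;
disjointness of the balls is the triangle inequality.
-/

open Real Complex

noncomputable def zpt (n : ℕ) (α : Fin n → ℤ) : ℂ :=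
  ∑ k : Fin n, ((1:ℂ)/3) ^ ((k:ℕ) + 1) *
    Complex.exp (Complex.I * π * (1/2 + (2/3) * (α k : ℂ)))

open Finset

lemma exists_forall_lt_eq_and_ne {ι β : Type*} [LinearOrder ι] [WellFoundedLT ι] {f g : ι → β}
    (h : f ≠ g) : ∃ j, (∀ i < j, f i = g i) ∧ f j ≠ g j := by
  obtain ⟨j, hj, hmin⟩ := wellFounded_lt.has_min {i | f i ≠ g i} (Function.ne_iff.mp h)
  exact ⟨j, fun i hi => not_not.mp fun hne => hmin i hne hi, hj⟩

lemma norm_sub_sum_Ioi_le_norm_sum {E : Type*} [SeminormedAddCommGroup E] {n : ℕ}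
    (c : Fin n → E) (j : Fin n) (hc : ∀ k < j, c k = 0) :
    ‖c j‖ - ∑ k ∈ Ioi j, ‖c k‖ ≤ ‖∑ k, c k‖ := by
  have hsplit : ∑ k, c k = c j + ∑ k ∈ Ioi j, c k := by
    rw [← add_sum_erase _ _ (mem_univ j)]
    congr 1
    refine (sum_subset (fun k hk => ?_) fun k hk hkj => hc k ?_).symm
    · exact mem_erase.mpr ⟨(mem_Ioi.mp hk).ne', mem_univ k⟩
    · exact lt_of_le_of_ne (not_lt.mp (mt mem_Ioi.mpr hkj)) (ne_of_mem_erase hk)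
  rw [hsplit]
  calc ‖c j‖ - ∑ k ∈ Ioi j, ‖c k‖ ≤ ‖c j‖ - ‖∑ k ∈ Ioi j, c k‖ := by
        gcongr; exact norm_sum_le _ _
    _ ≤ ‖c j + ∑ k ∈ Ioi j, c k‖ := by simpa using norm_sub_norm_le (c j) (-∑ k ∈ Ioi j, c k)

lemma sum_Ioi_pow_succ_le {r : ℝ} (hr0 : 0 ≤ r) (hr1 : r < 1) {n : ℕ} (j : Fin n) :
    ∑ k ∈ Ioi j, r ^ ((k : ℕ) + 1) ≤ r ^ ((j : ℕ) + 1) * ∑' m : ℕ, r ^ (m + 1) := by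
  have hsum : Summable fun m : ℕ => r ^ (m + 1) :=
    (summable_geometric_of_lt_one hr0 hr1).comp_injective (add_left_injective 1)
  calc ∑ k ∈ Ioi j, r ^ ((k : ℕ) + 1)
      = ∑ k ∈ Ico ((j : ℕ) + 1) n, r ^ (k + 1) := by
        rw [Finset.Ico_add_one_left_eq_Ioo, ← Fin.map_valEmbedding_Ioi, sum_map]; rfl
    _ = r ^ ((j : ℕ) + 1) * ∑ m ∈ range (n - ((j : ℕ) + 1)), r ^ (m + 1) := by
        rw [sum_Ico_eq_sum_range, mul_sum]
        exact sum_congr rfl fun m _ => by ring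
    _ ≤ r ^ ((j : ℕ) + 1) * ∑' m : ℕ, r ^ (m + 1) := by
        gcongr
        exact hsum.sum_le_tsum _ fun m _ => by positivity

noncomputable def gasketDir (a : ℤ) : ℂ :=
  Complex.exp (Complex.I * π * (1/2 + (2/3) * (a : ℂ)))

lemma norm_gasketDir (a : ℤ) : ‖gasketDir a‖ = 1 := by
  rw [gasketDir, show I * π * (1/2 + (2/3) * (a : ℂ)) = I * ((π * (1/2 + (2/3) * a) : ℝ) : ℂ) by
    push_cast; ring]
  exact norm_exp_I_mul_ofReal _

lemma norm_gasketDir_sub_gasketDir (a b : ℤ) :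
    ‖gasketDir a - gasketDir b‖ = 2 * |Real.sin (π * (a - b) / 3)| := by
  have hfactor : gasketDir a - gasketDir b =
      gasketDir b * (exp (I * ((2 * π * (a - b) / 3 : ℝ) : ℂ)) - 1) := by
    rw [mul_sub, mul_one, gasketDir, gasketDir, ← Complex.exp_add]
    congr 2
    push_cast
    ring
  rw [hfactor, norm_mul, norm_gasketDir, one_mul, norm_exp_I_mul_ofReal_sub_one, norm_mul,
    Real.norm_two, Real.norm_eq_abs]
  congr 3
  ring

lemma abs_sin_pi_mul_div_three {d : ℤ} (hd : d ∈ ({-2, -1, 1, 2} : Set ℤ)) :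
    |Real.sin (π * d / 3)| = √3 / 2 := by
  have h1 : Real.sin (π * 1 / 3) = √3 / 2 := by rw [mul_one, sin_pi_div_three]
  have h2 : Real.sin (π * 2 / 3) = √3 / 2 := by
    rw [← sin_pi_div_three, show π * 2 / 3 = π - π / 3 by ring, Real.sin_pi_sub]
  have hpos : (0 : ℝ) ≤ √3 / 2 := by positivity
  rcases hd with rfl | rfl | rfl | rfl <;>
    simp only [Int.cast_neg, Int.cast_one, Int.cast_ofNat, mul_neg, neg_div, Real.sin_neg,
      abs_neg, h1, h2, abs_of_nonneg hpos]

lemma norm_gasketDir_sub_gasketDir_of_ne {a b : ℤ} (ha : a ∈ ({-1, 0, 1} : Set ℤ))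
    (hb : b ∈ ({-1, 0, 1} : Set ℤ)) (hab : a ≠ b) : ‖gasketDir a - gasketDir b‖ = √3 := by
  have hd : a - b ∈ ({-2, -1, 1, 2} : Set ℤ) := by
    simp only [Set.mem_insert_iff, Set.mem_singleton_iff] at ha hb ⊢
    omega
  rw [norm_gasketDir_sub_gasketDir, ← Int.cast_sub, abs_sin_pi_mul_div_three hd]
  ring

lemma zpt_sub_zpt (n : ℕ) (α β : Fin n → ℤ) :
    zpt n α - zpt n β =
      ∑ k : Fin n, ((1:ℂ)/3) ^ ((k:ℕ) + 1) * (gasketDir (α k) - gasketDir (β k)) := by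
  simp only [zpt, gasketDir, mul_sub, sum_sub_distrib]

lemma le_norm_zpt_sub_zpt {n : ℕ} {α β : Fin n → ℤ}
    (hα : ∀ i, α i ∈ ({-1, 0, 1} : Set ℤ)) (hβ : ∀ i, β i ∈ ({-1, 0, 1} : Set ℤ))
    (j : Fin n) (hlt : ∀ i < j, α i = β i) (hj : α j ≠ β j) :
    √3 * 3⁻¹ ^ ((j : ℕ) + 1) * (1 - ∑' m : ℕ, (3⁻¹ : ℝ) ^ (m + 1)) ≤ ‖zpt n α - zpt n β‖ := by
  set c : Fin n → ℂ := fun k => ((1:ℂ)/3) ^ ((k:ℕ) + 1) * (gasketDir (α k) - gasketDir (β k))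
  have hnorm : ∀ k, ‖c k‖ = 3⁻¹ ^ ((k : ℕ) + 1) * ‖gasketDir (α k) - gasketDir (β k)‖ := by
    intro k; simp [c]
  have hcj : ‖c j‖ = √3 * 3⁻¹ ^ ((j : ℕ) + 1) := by
    rw [hnorm, norm_gasketDir_sub_gasketDir_of_ne (hα j) (hβ j) hj, mul_comm]
  have hck : ∀ k, ‖c k‖ ≤ √3 * 3⁻¹ ^ ((k : ℕ) + 1) := by
    intro k
    rw [hnorm, mul_comm]
    gcongr
    by_cases h : α k = β k
    · simp [h]
    · exact (norm_gasketDir_sub_gasketDir_of_ne (hα k) (hβ k) h).le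
  have htail : ∑ k ∈ Ioi j, ‖c k‖ ≤ √3 * (3⁻¹ ^ ((j : ℕ) + 1) * ∑' m : ℕ, (3⁻¹ : ℝ) ^ (m + 1)) :=
    calc ∑ k ∈ Ioi j, ‖c k‖ ≤ ∑ k ∈ Ioi j, √3 * 3⁻¹ ^ ((k : ℕ) + 1) := sum_le_sum fun k _ => hck k
      _ = √3 * ∑ k ∈ Ioi j, (3⁻¹ : ℝ) ^ ((k : ℕ) + 1) := (mul_sum _ _ _).symm
      _ ≤ _ := by gcongr; exact sum_Ioi_pow_succ_le (by norm_num) (by norm_num) j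
  have hzero : ∀ k < j, c k = 0 := fun k hk => by simp [c, hlt k hk]
  calc √3 * 3⁻¹ ^ ((j : ℕ) + 1) * (1 - ∑' m : ℕ, (3⁻¹ : ℝ) ^ (m + 1))
      ≤ ‖c j‖ - ∑ k ∈ Ioi j, ‖c k‖ := by rw [hcj]; linarith
    _ ≤ ‖zpt n α - zpt n β‖ := by
      rw [zpt_sub_zpt]; exact norm_sub_sum_Ioi_le_norm_sum c j hzero

lemma three_zpow_neg_succ (k : ℕ) : (3 : ℝ) ^ (-((k : ℕ) + 1 : ℤ)) = 3⁻¹ ^ (k + 1) := by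
  rw [← Nat.cast_succ, zpow_neg, zpow_natCast, inv_pow]

lemma tsum_inv_three_pow_succ : ∑' m : ℕ, (3⁻¹ : ℝ) ^ (m + 1) = 1 / 2 := by
  simp only [pow_succ', tsum_mul_left]
  rw [tsum_geometric_of_lt_one (by norm_num) (by norm_num)]
  norm_num

theorem gasket_centers_separated (n : ℕ) (α β : Fin n → ℤ)
    (hα : ∀ i, α i ∈ ({-1, 0, 1} : Set ℤ)) (hβ : ∀ i, β i ∈ ({-1, 0, 1} : Set ℤ))
    (hne : α ≠ β) :
    (‖zpt n α - zpt n β‖ ≥ 2 * (3:ℝ) ^ (-(n:ℤ)) →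
      Disjoint (Metric.ball (zpt n α) ((3:ℝ) ^ (-(n:ℤ))))
        (Metric.ball (zpt n β) ((3:ℝ) ^ (-(n:ℤ))))) ∧
    (∀ j : Fin n, (∀ i : Fin n, i < j → α i = β i) → α j ≠ β j →
      ‖zpt n α - zpt n β‖ ≥
        Real.sqrt 3 * (3:ℝ) ^ (-((j:ℕ) + 1 : ℤ)) *
          (1 - ∑' k : ℕ, (3:ℝ) ^ (-((k:ℕ) + 1 : ℤ)))) ∧
    zpt n α ≠ zpt n β := by
  refine ⟨fun h => Metric.ball_disjoint_ball (by rw [dist_eq_norm]; linarith),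
    fun j hlt hj => ?_, ?_⟩
  · simpa only [three_zpow_neg_succ] using le_norm_zpt_sub_zpt hα hβ j hlt hj
  · obtain ⟨j, hlt, hj⟩ := exists_forall_lt_eq_and_ne hne
    have hsep := le_norm_zpt_sub_zpt hα hβ j hlt hj
    rw [tsum_inv_three_pow_succ] at hsep
    have hpos : 0 < ‖zpt n α - zpt n β‖ := lt_of_lt_of_le (by positivity) hsep
    exact sub_ne_zero.mp (norm_pos_iff.mp hpos)
end
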